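/- arXiv:math/9404238 — 4 statements merged into one kernel-verified Lean document; each statement's English description precedes it below -/
import Mathlib

section
/- For every irrational ρ ∈ (0,1), the points (0, ρ) and (ρ, 0) belong to Λ_ρ and are extreme points of Λ_ρ. -/
open Filter Topology

noncomputable def alphaSeq (ρ : ℝ) (n : ℕ) : ℝ := (⌈(n : ℝ) * ρ⌉ : ℝ) - (n : ℝ) * ρ

noncomputable def vecRho (ρ : ℝ) (m n : ℕ) : ℝ × ℝ :=
  ((⌈(m : ℝ) * ρ⌉ : ℝ) / ((m : ℝ) + (n : ℝ) + 1),
   (⌈(n : ℝ) * ρ⌉ : ℝ) / ((m : ℝ) + (n : ℝ) + 1))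

noncomputable def LambdaSet (ρ : ℝ) : Set (ℝ × ℝ) :=
  closure (convexHull ℝ
    ({((0 : ℝ), (0 : ℝ))} ∪
      {p : ℝ × ℝ | ∃ m n : ℕ, alphaSeq ρ m < ρ ∧ alphaSeq ρ n < ρ ∧ p = vecRho ρ m n}))

/-!
`Λ_ρ` lies in the square `[0, ρ]²`, since `α_m < ρ` means `⌈mρ⌉ < (m + 1)ρ`. The points
`ρ_{0,n}` and `ρ_{n,0}` tend to `(0, ρ)` and `(ρ, 0)`, and `α_n < ρ` holds for
infinitely many `n` (namely for `n = ⌊k/ρ⌋`, `k ∈ ℕ`), so both points lie in the closed set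
`Λ_ρ`. Being corners of the square, they are extreme points of any subset containing them.
-/

lemma alphaSeq_zero (ρ : ℝ) : alphaSeq ρ 0 = 0 := by
  simp [alphaSeq]

lemma alphaSeq_nonneg (ρ : ℝ) (n : ℕ) : 0 ≤ alphaSeq ρ n :=
  sub_nonneg.mpr (Int.le_ceil _)

lemma alphaSeq_floor_div_lt {ρ : ℝ} (hρ : 0 < ρ) (k : ℕ) : alphaSeq ρ ⌊(k : ℝ) / ρ⌋₊ < ρ := by
  set n := ⌊(k : ℝ) / ρ⌋₊
  have hnk : (n : ℝ) * ρ ≤ k := (le_div_iff₀ hρ).mp (Nat.floor_le (by positivity))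
  have hkn : (k : ℝ) < (n + 1) * ρ := (div_lt_iff₀ hρ).mp (Nat.lt_floor_add_one _)
  have hceil : (⌈(n : ℝ) * ρ⌉ : ℝ) ≤ k := by
    exact_mod_cast Int.ceil_le.mpr (by exact_mod_cast hnk)
  unfold alphaSeq
  linarith

lemma frequently_alphaSeq_lt {ρ : ℝ} (hρ : 0 < ρ) : ∃ᶠ n in atTop, alphaSeq ρ n < ρ :=
  (tendsto_nat_floor_atTop.comp (tendsto_natCast_atTop_atTop.atTop_div_const hρ)).frequently
    (Frequently.of_forall (alphaSeq_floor_div_lt hρ))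

lemma tendsto_ceil_mul_div_add_one (ρ : ℝ) :
    Tendsto (fun n : ℕ ↦ (⌈(n : ℝ) * ρ⌉ : ℝ) / (n + 1)) atTop (𝓝 ρ) := by
  have h : Tendsto (fun n : ℕ ↦ 1 / ((n : ℝ) + 1)) atTop (𝓝 0) :=
    tendsto_one_div_add_atTop_nhds_zero_nat
  have hlower : Tendsto (fun n : ℕ ↦ ρ - ρ * (1 / ((n : ℝ) + 1))) atTop (𝓝 ρ) := by
    simpa using tendsto_const_nhds.sub (tendsto_const_nhds.mul h)
  have hupper : Tendsto (fun n : ℕ ↦ ρ + (1 - ρ) * (1 / ((n : ℝ) + 1))) atTop (𝓝 ρ) := by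
    simpa using tendsto_const_nhds.add (tendsto_const_nhds.mul h)
  refine tendsto_of_tendsto_of_tendsto_of_le_of_le hlower hupper (fun n ↦ ?_) (fun n ↦ ?_)
  · calc ρ - ρ * (1 / ((n : ℝ) + 1)) = n * ρ / (n + 1) := by field_simp; ring
      _ ≤ (⌈(n : ℝ) * ρ⌉ : ℝ) / (n + 1) := by gcongr; exact Int.le_ceil _
  · calc (⌈(n : ℝ) * ρ⌉ : ℝ) / (n + 1) ≤ (n * ρ + 1) / (n + 1) := by
          gcongr; exact (Int.ceil_lt_add_one _).le
      _ = ρ + (1 - ρ) * (1 / ((n : ℝ) + 1)) := by field_simp; ring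

lemma tendsto_vecRho_zero_left (ρ : ℝ) :
    Tendsto (fun n ↦ vecRho ρ 0 n) atTop (𝓝 (0, ρ)) := by
  simpa [vecRho, add_comm] using
    (tendsto_const_nhds (x := (0 : ℝ))).prodMk_nhds (tendsto_ceil_mul_div_add_one ρ)

lemma tendsto_vecRho_zero_right (ρ : ℝ) :
    Tendsto (fun n ↦ vecRho ρ n 0) atTop (𝓝 (ρ, 0)) := by
  simpa [vecRho] using
    (tendsto_ceil_mul_div_add_one ρ).prodMk_nhds (tendsto_const_nhds (x := (0 : ℝ)))

lemma vecRho_mem_LambdaSet {ρ : ℝ} {m n : ℕ} (hm : alphaSeq ρ m < ρ) (hn : alphaSeq ρ n < ρ) :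
    vecRho ρ m n ∈ LambdaSet ρ :=
  subset_closure (subset_convexHull ℝ _ (Or.inr ⟨m, n, hm, hn, rfl⟩))

lemma zero_rho_mem_LambdaSet {ρ : ℝ} (hρ : 0 < ρ) : ((0 : ℝ), ρ) ∈ LambdaSet ρ :=
  isClosed_closure.mem_of_frequently_of_tendsto
    ((frequently_alphaSeq_lt hρ).mono fun _ hn ↦
      vecRho_mem_LambdaSet (by rwa [alphaSeq_zero]) hn)
    (tendsto_vecRho_zero_left ρ)

lemma rho_zero_mem_LambdaSet {ρ : ℝ} (hρ : 0 < ρ) : (ρ, (0 : ℝ)) ∈ LambdaSet ρ :=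
  isClosed_closure.mem_of_frequently_of_tendsto
    ((frequently_alphaSeq_lt hρ).mono fun _ hm ↦
      vecRho_mem_LambdaSet hm (by rwa [alphaSeq_zero]))
    (tendsto_vecRho_zero_right ρ)

lemma ceil_mul_div_mem_Icc {ρ : ℝ} {m : ℕ} {d : ℝ} (hm : alphaSeq ρ m < ρ)
    (hd : (m : ℝ) + 1 ≤ d) :
    (⌈(m : ℝ) * ρ⌉ : ℝ) / d ∈ Set.Icc 0 ρ := by
  have hρ : 0 ≤ ρ := (alphaSeq_nonneg ρ m).trans hm.le
  have hm0 : (0 : ℝ) ≤ m := m.cast_nonneg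
  have hd0 : 0 < d := by linarith
  have hle := Int.le_ceil ((m : ℝ) * ρ)
  unfold alphaSeq at hm
  constructor
  · exact div_nonneg (by nlinarith) hd0.le
  · rw [div_le_iff₀ hd0]
    nlinarith

lemma LambdaSet_subset_Icc_prod_Icc {ρ : ℝ} (hρ : 0 ≤ ρ) :
    LambdaSet ρ ⊆ Set.Icc 0 ρ ×ˢ Set.Icc 0 ρ := by
  refine closure_minimal (convexHull_min ?_ ((convex_Icc _ _).prod (convex_Icc _ _)))
    (isClosed_Icc.prod isClosed_Icc)
  rintro p (rfl | ⟨m, n, hm, hn, rfl⟩)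
  · exact ⟨⟨le_rfl, hρ⟩, ⟨le_rfl, hρ⟩⟩
  · have hm0 : (0 : ℝ) ≤ m := m.cast_nonneg
    have hn0 : (0 : ℝ) ≤ n := n.cast_nonneg
    exact ⟨ceil_mul_div_mem_Icc hm (by linarith), ceil_mul_div_mem_Icc hn (by linarith)⟩

theorem stmt2_general (ρ : ℝ) (h0 : 0 < ρ) :
    ((0 : ℝ), ρ) ∈ LambdaSet ρ ∧ (ρ, (0 : ℝ)) ∈ LambdaSet ρ ∧
    ((0 : ℝ), ρ) ∈ Set.extremePoints ℝ (LambdaSet ρ) ∧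
    (ρ, (0 : ℝ)) ∈ Set.extremePoints ℝ (LambdaSet ρ) := by
  have hleft := zero_rho_mem_LambdaSet h0
  have hright := rho_zero_mem_LambdaSet h0
  have hcorner : ∀ p ∈ LambdaSet ρ, p.1 ∈ ({0, ρ} : Set ℝ) → p.2 ∈ ({0, ρ} : Set ℝ) →
      p ∈ Set.extremePoints ℝ (LambdaSet ρ) := fun p hp h1 h2 ↦
    inter_extremePoints_subset_extremePoints_of_subset (LambdaSet_subset_Icc_prod_Icc h0.le)
      ⟨hp, by rw [extremePoints_prod, Set.extremePoints_Icc h0.le]; exact ⟨h1, h2⟩⟩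
  exact ⟨hleft, hright, hcorner _ hleft (by simp) (by simp), hcorner _ hright (by simp) (by simp)⟩

theorem stmt2 (ρ : ℝ) (hirr : Irrational ρ) (h0 : 0 < ρ) (h1 : ρ < 1) :
    ((0 : ℝ), ρ) ∈ LambdaSet ρ ∧ (ρ, (0 : ℝ)) ∈ LambdaSet ρ ∧
    ((0 : ℝ), ρ) ∈ Set.extremePoints ℝ (LambdaSet ρ) ∧
    (ρ, (0 : ℝ)) ∈ Set.extremePoints ℝ (LambdaSet ρ) :=
  stmt2_general ρ h0
end

section
/- Let ρ ∈ (0,1) be irrational, and for m,n ∈ ℕ with m ≥ 1 define γ_{m,n} := −1 + (α_m + α_n − ρ)/⌈mρ⌉. Let s be the supremum of the set S := { γ_{m,n} : m,n ∈ ℕ, m ≥ 1, α_m < ρ, α_n < ρ }. Then: (a) s > −1; (b) s is not attained, i.e. γ_{m,n} < s for every admissible pair (m,n); and (c) for any sequences (m_k), (n_k) of admissible pairs with γ_{m_k,n_k} → s, the vectors ρ_{m_k,n_k} converge to (0, ρ), the sequence (m_k) is bounded, and n_k → ∞. -/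
open Filter Topology

/-- The slope of the line through the point `vecRho ρ m n` and `(0, ρ)`. -/
noncomputable def gammaSlope (ρ : ℝ) (m n : ℕ) : ℝ :=
  -1 + (alphaSeq ρ m + alphaSeq ρ n - ρ) / (⌈(m : ℝ) * ρ⌉ : ℝ)

/-- Admissible pairs `(m, n)` with `m ≥ 1`, `α_m < ρ`, `α_n < ρ`. -/
def Admissible (ρ : ℝ) : Set (ℕ × ℕ) :=
  {p : ℕ × ℕ | 1 ≤ p.1 ∧ alphaSeq ρ p.1 < ρ ∧ alphaSeq ρ p.2 < ρ}

lemma alphaSeq_lt_one (ρ : ℝ) (n : ℕ) : alphaSeq ρ n < 1 := by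
  have := Int.ceil_lt_add_one ((n : ℝ) * ρ)
  unfold alphaSeq; linarith

lemma alphaSeq_pos {ρ : ℝ} (hirr : Irrational ρ) {n : ℕ} (hn : 1 ≤ n) :
    0 < alphaSeq ρ n := by
  have hirr' : Irrational ((n : ℝ) * ρ) := hirr.natCast_mul (by omega)
  have h1 := Int.le_ceil ((n : ℝ) * ρ)
  have h2 : (n : ℝ) * ρ ≠ (⌈(n : ℝ) * ρ⌉ : ℝ) := hirr'.ne_int _
  unfold alphaSeq
  rcases h1.lt_or_eq with h | h
  · linarith
  · exact absurd h h2

lemma ceil_one_le {ρ : ℝ} (h0 : 0 < ρ) {m : ℕ} (hm : 1 ≤ m) :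
    (1 : ℝ) ≤ (⌈(m : ℝ) * ρ⌉ : ℝ) := by
  have hpos : (0 : ℝ) < (m : ℝ) * ρ := by
    have : (1 : ℝ) ≤ (m : ℝ) := by exact_mod_cast hm
    nlinarith
  have h := Int.ceil_pos.mpr hpos
  have h' : (1 : ℤ) ≤ ⌈(m : ℝ) * ρ⌉ := h
  exact_mod_cast h'

lemma alphaSeq_eq {ρ : ℝ} (n : ℕ) (c : ℤ) (t : ℝ) (h : (n : ℝ) * ρ = (c : ℝ) - t)
    (ht0 : 0 < t) (ht1 : t < 1) : alphaSeq ρ n = t := by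
  have hc : ⌈(n : ℝ) * ρ⌉ = c := by
    rw [h, show (c : ℝ) - t = -t + (c : ℝ) by ring, Int.ceil_add_intCast]
    have : ⌈-t⌉ = 0 := Int.ceil_eq_zero_iff.mpr ⟨by linarith, by linarith⟩
    omega
  unfold alphaSeq
  rw [hc, h]; ring

/-- Density: `α_n` comes arbitrarily close to `ρ` from below. -/
lemma exists_alphaSeq_near {ρ : ℝ} (hirr : Irrational ρ) (h0 : 0 < ρ) (h1 : ρ < 1)
    {ε : ℝ} (hε : 0 < ε) :
    ∃ n : ℕ, 1 ≤ n ∧ ρ - ε < alphaSeq ρ n ∧ alphaSeq ρ n < ρ := by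
  set S := AddSubgroup.closure ({1, ρ} : Set ℝ) with hSdef
  have hdense : Dense (S : Set ℝ) := by
    rcases S.dense_or_cyclic with hd | ⟨a, ha⟩
    · exact hd
    · exfalso
      have h1mem : (1 : ℝ) ∈ S := AddSubgroup.subset_closure (by simp)
      have hρmem : ρ ∈ S := AddSubgroup.subset_closure (by simp)
      rw [ha, AddSubgroup.mem_closure_singleton] at h1mem hρmem
      obtain ⟨p, hp⟩ := h1mem
      obtain ⟨q, hq⟩ := hρmem
      have hp' : (p : ℝ) * a = 1 := by rw [← hp]; simp [zsmul_eq_mul]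
      have hq' : (q : ℝ) * a = ρ := by rw [← hq]; simp [zsmul_eq_mul]
      have hpne : (p : ℝ) ≠ 0 := by
        rintro h; rw [h, zero_mul] at hp'; norm_num at hp'
      have hval : ρ = (q : ℝ) / (p : ℝ) := by
        rw [eq_div_iff hpne]; linear_combination q * hp' - p * hq'
      exact hirr ⟨(q : ℚ) / (p : ℚ), by push_cast; rw [hval]⟩
  set δ := min ε ρ with hδdef
  have hδ0 : 0 < δ := lt_min hε h0
  obtain ⟨g, hgS, hg⟩ :=
    hdense.exists_mem_open isOpen_Ioo (Set.nonempty_Ioo.mpr (by linarith : (0:ℝ) < δ))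
  obtain ⟨hg0, hgδ⟩ := hg
  have hgε : g < ε := lt_of_lt_of_le hgδ (min_le_left _ _)
  have hgρ : g < ρ := lt_of_lt_of_le hgδ (min_le_right _ _)
  rw [SetLike.mem_coe, hSdef, AddSubgroup.mem_closure_pair] at hgS
  obtain ⟨u, v, huv⟩ := hgS
  have huv' : (u : ℝ) + (v : ℝ) * ρ = g := by
    rw [← huv]; simp [zsmul_eq_mul]
  have hvne : v ≠ 0 := by
    rintro rfl
    simp only [Int.cast_zero, zero_mul, add_zero] at huv'
    have h01 : (0 : ℝ) < (u : ℝ) := by rw [huv']; exact hg0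
    have h02 : (u : ℝ) < 1 := by rw [huv']; linarith
    have : (1 : ℤ) ≤ u := by exact_mod_cast h01
    have : (1 : ℝ) ≤ (u : ℝ) := by exact_mod_cast this
    linarith
  rcases hvne.lt_or_gt with hvneg | hvpos
  · -- v < 0 : α_{n₀} = g directly; step up into (ρ - ε, ρ)
    obtain ⟨n₀, hn₀⟩ : ∃ n₀ : ℕ, (n₀ : ℝ) = -(v : ℝ) := by
      refine ⟨(-v).toNat, ?_⟩
      have h' : ((-v).toNat : ℤ) = -v := Int.toNat_of_nonneg (by omega)
      exact_mod_cast congrArg (fun z : ℤ => (z : ℝ)) h'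
    have hn₀1 : 1 ≤ n₀ := by
      by_contra h
      have : n₀ = 0 := by omega
      rw [this] at hn₀
      have : (v : ℝ) = 0 := by simpa using hn₀.symm
      exact hvneg.ne (by exact_mod_cast this)
    obtain ⟨k, hk1, hkx, hkle⟩ : ∃ k : ℕ, 1 ≤ k ∧ (ρ - ε) / g < (k : ℝ) ∧
        ((ρ - ε) / g ≤ 0 → k = 1) ∧ (0 < (ρ - ε) / g → (k : ℝ) ≤ (ρ - ε) / g + 1) := by
      refine ⟨(⌊(ρ - ε) / g⌋).toNat + 1, by omega, ?_, ?_, ?_⟩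
      · have h1' : (⌊(ρ - ε) / g⌋ : ℝ) ≤ (((⌊(ρ - ε) / g⌋).toNat : ℕ) : ℝ) := by
          exact_mod_cast Int.self_le_toNat _
        have h2' := Int.lt_floor_add_one ((ρ - ε) / g)
        push_cast
        linarith
      · intro hle
        have : ⌊(ρ - ε) / g⌋ ≤ 0 := Int.floor_nonpos hle
        omega
      · intro hpos
        have hfl : (((⌊(ρ - ε) / g⌋).toNat : ℕ) : ℝ) = (⌊(ρ - ε) / g⌋ : ℝ) := by
          exact_mod_cast Int.toNat_of_nonneg (Int.floor_nonneg.mpr hpos.le)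
        push_cast
        rw [hfl]
        linarith [Int.floor_le ((ρ - ε) / g)]
    obtain ⟨hkone, hkub⟩ := hkle
    have hkg_lo : ρ - ε < (k : ℝ) * g := by
      have := (div_lt_iff₀ hg0).mp hkx
      linarith
    have hkg_hi : (k : ℝ) * g < ρ := by
      rcases le_or_gt ((ρ - ε) / g) 0 with hx0 | hx0
      · rw [hkone hx0]; simpa using hgρ
      · have h' := hkub hx0
        have hxg : (ρ - ε) / g * g = ρ - ε := by field_simp
        nlinarith
    have hkg0 : 0 < (k : ℝ) * g := by
      have : (0 : ℝ) < (k : ℝ) := by exact_mod_cast hk1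
      positivity
    have heq : ((k * n₀ : ℕ) : ℝ) * ρ = (((k : ℤ) * u : ℤ) : ℝ) - (k : ℝ) * g := by
      have h' : (n₀ : ℝ) * ρ = (u : ℝ) - g := by rw [hn₀]; linarith [huv']
      push_cast
      linear_combination (k : ℝ) * h' 
    have hα : alphaSeq ρ (k * n₀) = (k : ℝ) * g :=
      alphaSeq_eq (k * n₀) ((k : ℤ) * u) ((k : ℝ) * g) heq hkg0 (by linarith)
    exact ⟨k * n₀, Nat.one_le_iff_ne_zero.mpr (by positivity),
      by rw [hα]; linarith, by rw [hα]; linarith⟩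
  · -- v > 0 : make kg land in (1 - ρ, 1 - ρ + ε)
    obtain ⟨n₀, hn₀⟩ : ∃ n₀ : ℕ, (n₀ : ℝ) = (v : ℝ) := by
      refine ⟨v.toNat, ?_⟩
      have h' : (v.toNat : ℤ) = v := Int.toNat_of_nonneg (by omega)
      exact_mod_cast congrArg (fun z : ℤ => (z : ℝ)) h'
    have hn₀1 : 1 ≤ n₀ := by
      by_contra h
      have : n₀ = 0 := by omega
      rw [this] at hn₀
      have : (v : ℝ) = 0 := by simpa using hn₀.symm
      exact hvpos.ne' (by exact_mod_cast this)
    have hx0 : 0 < (1 - ρ) / g := div_pos (by linarith) hg0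
    obtain ⟨k, hk1, hkx, hkub⟩ : ∃ k : ℕ, 1 ≤ k ∧ (1 - ρ) / g < (k : ℝ) ∧
        (k : ℝ) ≤ (1 - ρ) / g + 1 := by
      refine ⟨(⌊(1 - ρ) / g⌋).toNat + 1, by omega, ?_, ?_⟩ <;>
      · have hfl : (((⌊(1 - ρ) / g⌋).toNat : ℕ) : ℝ) = (⌊(1 - ρ) / g⌋ : ℝ) := by
          exact_mod_cast Int.toNat_of_nonneg (Int.floor_nonneg.mpr hx0.le)
        push_cast
        rw [hfl]
        first
        | linarith [Int.lt_floor_add_one ((1 - ρ) / g)]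
        | linarith [Int.floor_le ((1 - ρ) / g)]
    have hxg : (1 - ρ) / g * g = 1 - ρ := by field_simp
    have hkg_lo : 1 - ρ < (k : ℝ) * g := by nlinarith
    have hkg_hi : (k : ℝ) * g < 1 - ρ + ε := by nlinarith
    have hkg1 : (k : ℝ) * g < 1 := by nlinarith
    have heq : ((k * n₀ : ℕ) : ℝ) * ρ
        = (((1 : ℤ) - (k : ℤ) * u : ℤ) : ℝ) - (1 - (k : ℝ) * g) := by
      have h' : (n₀ : ℝ) * ρ = g - (u : ℝ) := by rw [hn₀]; linarith [huv']
      push_cast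
      linear_combination (k : ℝ) * h' 
    have hα : alphaSeq ρ (k * n₀) = 1 - (k : ℝ) * g :=
      alphaSeq_eq (k * n₀) ((1 : ℤ) - (k : ℤ) * u) (1 - (k : ℝ) * g) heq
        (by linarith) (by linarith)
    exact ⟨k * n₀, Nat.one_le_iff_ne_zero.mpr (by positivity),
      by rw [hα]; linarith, by rw [hα]; linarith⟩

/-- Key: for any admissible `m`, `-1 + α_m / ⌈mρ⌉ ≤ s`. -/
lemma le_lub_aux {ρ : ℝ} (hirr : Irrational ρ) (h0 : 0 < ρ) (h1 : ρ < 1) {s : ℝ}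
    (hs : IsLUB {γ : ℝ | ∃ p ∈ Admissible ρ, γ = gammaSlope ρ p.1 p.2} s)
    {m : ℕ} (hm : 1 ≤ m) (hαm : alphaSeq ρ m < ρ) :
    -1 + alphaSeq ρ m / (⌈(m : ℝ) * ρ⌉ : ℝ) ≤ s := by
  refine le_of_forall_pos_le_add fun ε hε => ?_
  obtain ⟨n, hn1, hn2, hn3⟩ := exists_alphaSeq_near hirr h0 h1 hε
  have hC : (1 : ℝ) ≤ (⌈(m : ℝ) * ρ⌉ : ℝ) := ceil_one_le h0 hm
  have hC0 : (0 : ℝ) < (⌈(m : ℝ) * ρ⌉ : ℝ) := by linarith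
  have hmem : gammaSlope ρ m n ∈ {γ : ℝ | ∃ p ∈ Admissible ρ, γ = gammaSlope ρ p.1 p.2} :=
    ⟨(m, n), ⟨hm, hαm, hn3⟩, rfl⟩
  have hle := hs.1 hmem
  unfold gammaSlope at hle
  have hdiff : alphaSeq ρ m / (⌈(m : ℝ) * ρ⌉ : ℝ)
      - (alphaSeq ρ m + alphaSeq ρ n - ρ) / (⌈(m : ℝ) * ρ⌉ : ℝ)
      = (ρ - alphaSeq ρ n) / (⌈(m : ℝ) * ρ⌉ : ℝ) := by
    field_simp
    ring
  have hsmall : (ρ - alphaSeq ρ n) / (⌈(m : ℝ) * ρ⌉ : ℝ) ≤ ρ - alphaSeq ρ n :=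
    div_le_self (by linarith) hC
  linarith

theorem stmt7 (ρ : ℝ) (hirr : Irrational ρ) (h0 : 0 < ρ) (h1 : ρ < 1)
    (s : ℝ) (hs : IsLUB {γ : ℝ | ∃ p ∈ Admissible ρ, γ = gammaSlope ρ p.1 p.2} s) :
    (-1 < s) ∧
    (∀ p ∈ Admissible ρ, gammaSlope ρ p.1 p.2 < s) ∧
    (∀ m n : ℕ → ℕ, (∀ k, (m k, n k) ∈ Admissible ρ) →
      Tendsto (fun k => gammaSlope ρ (m k) (n k)) atTop (𝓝 s) →
      Tendsto (fun k => vecRho ρ (m k) (n k)) atTop (𝓝 ((0 : ℝ), ρ)) ∧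
      (∃ B : ℕ, ∀ k, m k ≤ B) ∧
      Tendsto n atTop atTop) := by
  classical
  -- part (b)
  have hb : ∀ p ∈ Admissible ρ, gammaSlope ρ p.1 p.2 < s := by
    rintro ⟨m, n⟩ ⟨hm, hαm, hαn⟩
    have hkey := le_lub_aux hirr h0 h1 hs hm hαm
    have hC : (1 : ℝ) ≤ (⌈(m : ℝ) * ρ⌉ : ℝ) := ceil_one_le h0 hm
    have hC0 : (0 : ℝ) < (⌈(m : ℝ) * ρ⌉ : ℝ) := by linarith
    have hstrict : (alphaSeq ρ m + alphaSeq ρ n - ρ) / (⌈(m : ℝ) * ρ⌉ : ℝ)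
        < alphaSeq ρ m / (⌈(m : ℝ) * ρ⌉ : ℝ) :=
      div_lt_div_of_pos_right (by linarith) hC0
    unfold gammaSlope
    linarith
  -- part (a)
  have ha : -1 < s := by
    obtain ⟨m, hm1, hm2, hm3⟩ := exists_alphaSeq_near hirr h0 h1 h0 (ε := ρ)
    have hαpos : 0 < alphaSeq ρ m := alphaSeq_pos hirr hm1
    have hC : (1 : ℝ) ≤ (⌈(m : ℝ) * ρ⌉ : ℝ) := ceil_one_le h0 hm1
    have hkey := le_lub_aux hirr h0 h1 hs hm1 hm3
    have : 0 < alphaSeq ρ m / (⌈(m : ℝ) * ρ⌉ : ℝ) := div_pos hαpos (by linarith)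
    linarith
  refine ⟨ha, hb, ?_⟩
  intro m n hadm hγ
  -- Step 1: m is bounded
  set t := (s - 1) / 2 with htdef
  have hts : t < s := by rw [htdef]; linarith
  have h1t : -1 < t := by rw [htdef]; linarith
  have hev : ∀ᶠ k in atTop, t < gammaSlope ρ (m k) (n k) :=
    hγ.eventually (eventually_gt_nhds hts)
  obtain ⟨K, hK⟩ := eventually_atTop.mp hev
  have hbound : ∀ k, K ≤ k → (m k : ℝ) < 1 / (t + 1) := by
    intro k hk
    have h := hK k hk
    obtain ⟨hm1, hαm, hαn⟩ := hadm k
    have hC : (1 : ℝ) ≤ (⌈(m k : ℝ) * ρ⌉ : ℝ) := ceil_one_le h0 hm1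
    have hC0 : (0 : ℝ) < (⌈(m k : ℝ) * ρ⌉ : ℝ) := by linarith
    have hCm : (m k : ℝ) * ρ ≤ (⌈(m k : ℝ) * ρ⌉ : ℝ) := Int.le_ceil _
    have hαmlt := alphaSeq_lt_one ρ (m k)
    have hαnlt := alphaSeq_lt_one ρ (n k)
    have hγlt : gammaSlope ρ (m k) (n k) < -1 + ρ / (⌈(m k : ℝ) * ρ⌉ : ℝ) := by
      unfold gammaSlope
      have hnum : alphaSeq ρ (m k) + alphaSeq ρ (n k) - ρ < ρ := by linarith
      have := (div_lt_div_iff_of_pos_right hC0).mpr hnum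
      linarith
    have ht1 : 0 < t + 1 := by linarith
    have h2 : (t + 1) * (⌈(m k : ℝ) * ρ⌉ : ℝ) < ρ := by
      have : t + 1 < ρ / (⌈(m k : ℝ) * ρ⌉ : ℝ) := by linarith
      exact (lt_div_iff₀ hC0).mp this
    rw [lt_div_iff₀ ht1]
    nlinarith
  set B0 : ℕ := ⌈1 / (t + 1)⌉₊ with hB0def
  set B : ℕ := max B0 ((Finset.range K).sup m) with hBdef
  have hB : ∀ k, m k ≤ B := by
    intro k
    rcases lt_or_ge k K with hkK | hkK
    · exact le_trans (Finset.le_sup (Finset.mem_range.mpr hkK)) (le_max_right _ _)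
    · have h1' : (m k : ℝ) ≤ (B0 : ℝ) :=
        le_trans (hbound k hkK).le (Nat.le_ceil _)
      have : m k ≤ B0 := by exact_mod_cast h1'
      exact le_trans this (le_max_left _ _)
  -- Step 2: n → ∞
  have hn : Tendsto n atTop atTop := by
    by_contra hcon
    rw [tendsto_atTop_atTop] at hcon
    push_neg at hcon
    obtain ⟨N, hN⟩ := hcon
    set F : Finset (ℕ × ℕ) :=
      (Finset.range (B + 1) ×ˢ Finset.range (N + 1)).filter (fun p => p ∈ Admissible ρ)
      with hFdef
    have hmemF : ∀ k, n k < N → (m k, n k) ∈ F := by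
      intro k hk
      rw [hFdef, Finset.mem_filter, Finset.mem_product, Finset.mem_range, Finset.mem_range]
      exact ⟨⟨Nat.lt_succ_of_le (hB k), Nat.lt_succ_of_lt hk⟩, hadm k⟩
    obtain ⟨k₀, _, hk₀⟩ := hN 0
    have hne : F.Nonempty := ⟨_, hmemF k₀ hk₀⟩
    set M := F.sup' hne (fun p => gammaSlope ρ p.1 p.2) with hMdef
    have hM : M < s := by
      rw [hMdef, Finset.sup'_lt_iff]
      intro p hp
      exact hb p (Finset.mem_filter.mp hp).2
    have hev2 : ∀ᶠ k in atTop, M < gammaSlope ρ (m k) (n k) :=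
      hγ.eventually (eventually_gt_nhds hM)
    obtain ⟨K₁, hK₁⟩ := eventually_atTop.mp hev2
    obtain ⟨k, hkK, hkN⟩ := hN K₁
    exact absurd (Finset.le_sup' (fun p : ℕ × ℕ => gammaSlope ρ p.1 p.2) (hmemF k hkN))
      (not_le.mpr (hK₁ k hkK))
  -- Step 3: vecRho → (0, ρ)
  have hnn : Tendsto (fun k => (n k : ℝ)) atTop atTop :=
    tendsto_natCast_atTop_atTop.comp hn
  have hden : Tendsto (fun k => (n k : ℝ) + 1) atTop atTop :=
    tendsto_atTop_add_const_right _ 1 hnn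
  have hDpos : ∀ k, (0 : ℝ) < (m k : ℝ) + (n k : ℝ) + 1 := by
    intro k; positivity
  have hmB : ∀ k, (m k : ℝ) ≤ (B : ℝ) := fun k => by exact_mod_cast hB k
  have h1comp : Tendsto
      (fun k => (⌈(m k : ℝ) * ρ⌉ : ℝ) / ((m k : ℝ) + (n k : ℝ) + 1)) atTop (𝓝 0) := by
    apply squeeze_zero (g := fun k => ((B : ℝ) + 1) / ((n k : ℝ) + 1))
    · intro k
      apply div_nonneg _ (hDpos k).le
      have h1' : (0 : ℝ) ≤ (m k : ℝ) * ρ := by positivity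
      linarith [Int.le_ceil ((m k : ℝ) * ρ)]
    · intro k
      have hnum : (⌈(m k : ℝ) * ρ⌉ : ℝ) ≤ (B : ℝ) + 1 := by
        have h1' : (m k : ℝ) * ρ ≤ (m k : ℝ) := by nlinarith [(Nat.cast_nonneg (m k) : (0:ℝ) ≤ (m k : ℝ))]
        linarith [Int.ceil_lt_add_one ((m k : ℝ) * ρ), hmB k]
      have hden' : (n k : ℝ) + 1 ≤ (m k : ℝ) + (n k : ℝ) + 1 := by
        linarith [(Nat.cast_nonneg (m k) : (0:ℝ) ≤ (m k : ℝ))]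
      have hfinal : (⌈(m k : ℝ) * ρ⌉ : ℝ) / ((m k : ℝ) + (n k : ℝ) + 1)
          ≤ ((B : ℝ) + 1) / ((n k : ℝ) + 1) :=
        div_le_div₀ (by positivity) hnum (by positivity) hden'
      exact hfinal
    · exact tendsto_const_nhds.div_atTop hden
  have h2comp : Tendsto
      (fun k => (⌈(n k : ℝ) * ρ⌉ : ℝ) / ((m k : ℝ) + (n k : ℝ) + 1)) atTop (𝓝 ρ) := by
    have hsub : Tendsto
        (fun k => (⌈(n k : ℝ) * ρ⌉ : ℝ) / ((m k : ℝ) + (n k : ℝ) + 1) - ρ) atTop (𝓝 0) := by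
      apply squeeze_zero_norm (a := fun k => ((B : ℝ) + 2) / ((n k : ℝ) + 1))
      · intro k
        have hD := hDpos k
        have heq : (⌈(n k : ℝ) * ρ⌉ : ℝ) / ((m k : ℝ) + (n k : ℝ) + 1) - ρ
            = (alphaSeq ρ (n k) - ρ * ((m k : ℝ) + 1)) / ((m k : ℝ) + (n k : ℝ) + 1) := by
          unfold alphaSeq
          field_simp
          ring
        rw [heq, Real.norm_eq_abs, abs_div, abs_of_pos hD]
        have habs : |alphaSeq ρ (n k) - ρ * ((m k : ℝ) + 1)| ≤ (B : ℝ) + 2 := by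
          rw [abs_le]
          constructor
          · nlinarith [alphaSeq_nonneg ρ (n k), hmB k, (Nat.cast_nonneg (m k) : (0:ℝ) ≤ (m k : ℝ))]
          · nlinarith [alphaSeq_lt_one ρ (n k), hmB k, (Nat.cast_nonneg (m k) : (0:ℝ) ≤ (m k : ℝ))]
        have hden' : (n k : ℝ) + 1 ≤ (m k : ℝ) + (n k : ℝ) + 1 := by
          linarith [(Nat.cast_nonneg (m k) : (0:ℝ) ≤ (m k : ℝ))]
        have hfinal : |alphaSeq ρ (n k) - ρ * ((m k : ℝ) + 1)| / ((m k : ℝ) + (n k : ℝ) + 1)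
            ≤ ((B : ℝ) + 2) / ((n k : ℝ) + 1) :=
          div_le_div₀ (by positivity) habs (by positivity) hden'
        exact hfinal
      · exact tendsto_const_nhds.div_atTop hden
    have := hsub.add_const ρ
    simpa using this
  refine ⟨?_, ⟨B, hB⟩, hn⟩
  have := h1comp.prodMk_nhds h2comp
  exact this
end

section
/- Let Y be a compact metric space and let f : Y → Y be a near-homeomorphism, i.e. a continuous map that is the uniform limit of a sequence of homeomorphisms f_n : Y → Y. Then f is a factor of a homeomorphism of Y: there exist a homeomorphism f̂ : Y → Y and a continuous surjection h : Y → Y such that h ∘ f̂ = f ∘ h. -/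
/-!
Choose homeomorphisms `gₙ` uniformly close to `f` and put `H₀ = id`, `Hₙ₊₁ = Hₙ ∘ gₙ`. The
conjugates `Hₙ ∘ f ∘ Hₙ⁻¹` and the homeomorphisms `Hₙ₊₁ ∘ Hₙ⁻¹ = Hₙ ∘ gₙ ∘ Hₙ⁻¹` then converge
to a common limit `φ`, the maps `fⁿ ∘ Hₙ⁻¹` converge to some `h`, and passing to the limit in
`(fⁿ⁺¹ ∘ Hₙ₊₁⁻¹) ∘ (Hₙ₊₁ ∘ Hₙ⁻¹) = f ∘ (fⁿ ∘ Hₙ⁻¹)` gives `h ∘ φ = f ∘ h`. Uniform limits of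
surjections of a compact space are surjective. The crux is the injectivity of `φ`: each `gₙ` is
chosen so close to `f` that all later errors are small compared with moduli of continuity of
`Hₙ` and `Hₙ⁻¹`, so that `φ x = φ y` forces `d(x, y) ≤ Bₖ` for every `k`, where `Bₖ → 0`.
-/

open Filter Topology Function

theorem ContinuousMap.isClosed_setOf_surjective {X Y : Type*} [TopologicalSpace X]
    [TopologicalSpace Y] [CompactSpace X] [T1Space Y] :
    IsClosed {g : C(X, Y) | Surjective g} := by
  have : {g : C(X, Y) | Surjective g}ᶜ = ⋃ y, {g : C(X, Y) | Set.MapsTo g Set.univ {y}ᶜ} := by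
    ext g
    simp [Surjective, Set.MapsTo]
  rw [← isOpen_compl_iff, this]
  exact isOpen_iUnion fun _ => isOpen_setOfPred_mapsTo isCompact_univ isOpen_compl_singleton

def IsNearHomeomorph {Y : Type*} [TopologicalSpace Y] (f : C(Y, Y)) : Prop :=
  f ∈ closure (Set.range ((↑) : (Y ≃ₜ Y) → C(Y, Y)))

namespace IsNearHomeomorph

variable {Y : Type*}

theorem surjective [TopologicalSpace Y] [CompactSpace Y] [T1Space Y] {f : C(Y, Y)}
    (hf : IsNearHomeomorph f) : Surjective f :=
  ContinuousMap.isClosed_setOf_surjective.closure_subset_iff.2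
    (Set.range_subset_iff.2 fun g => g.surjective) hf

variable [MetricSpace Y]

-- `B` bounds every error committed at this stage.
structure Stage (Y : Type*) [MetricSpace Y] where
  H : Y ≃ₜ Y
  B : ℝ
  δ : ℝ
  B_pos : 0 < B
  δ_pos : 0 < δ
  dist_apply_le : ∀ u v, dist u v ≤ δ → dist (H u) (H v) ≤ B

structure Stage.IsGoodApprox (s : Stage Y) (f : C(Y, Y)) (n : ℕ) (g : Y ≃ₜ Y) : Prop where
  conj : ∀ x, dist (s.H (g x)) (s.H (f x)) ≤ s.B
  comm : ∀ x, dist (s.H (f (g x))) (s.H (g (f x))) ≤ s.B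
  close : ∀ x, dist (g x) (f x) ≤ s.δ / 4
  iterate : ∀ x, dist (f^[n] (g x)) (f^[n] (f x)) ≤ s.B

structure Stage.IsSuccessor (s : Stage Y) (f : C(Y, Y)) (n : ℕ) (g : Y ≃ₜ Y) (t : Stage Y) :
    Prop where
  approx : s.IsGoodApprox f n g
  H_eq : t.H = g.trans s.H
  B_le : t.B ≤ s.B / 2
  dist_symm_apply_le : ∀ u v, dist u v ≤ 4 * t.B → dist (t.H.symm u) (t.H.symm v) ≤ s.δ / 2

variable [CompactSpace Y] {f : C(Y, Y)}

theorem exists_isGoodApprox (hf : IsNearHomeomorph f) (s : Stage Y) (n : ℕ) :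
    ∃ g, s.IsGoodApprox f n g := by
  let H : C(Y, Y) := s.H
  let fn : C(Y, Y) := ⟨f^[n], f.continuous.iterate n⟩
  have conj : ∀ᶠ g in 𝓝 f, dist (H.comp g) (H.comp f) < s.B :=
    (by fun_prop : Continuous fun g => dist (H.comp g) (H.comp f)).continuousAt.eventually_lt
      continuousAt_const (by simpa using s.B_pos)
  have comm : ∀ᶠ g in 𝓝 f, dist (H.comp (f.comp g)) ((H.comp g).comp f) < s.B :=
    (by fun_prop : Continuous fun g => dist (H.comp (f.comp g)) ((H.comp g).comp f)
      ).continuousAt.eventually_lt continuousAt_const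
      (by simpa [ContinuousMap.comp_assoc] using s.B_pos)
  have close : ∀ᶠ g in 𝓝 f, dist g f < s.δ / 4 := Metric.ball_mem_nhds f (by linarith [s.δ_pos])
  have iterate : ∀ᶠ g in 𝓝 f, dist (fn.comp g) (fn.comp f) < s.B :=
    (by fun_prop : Continuous fun g => dist (fn.comp g) (fn.comp f)).continuousAt.eventually_lt
      continuousAt_const (by simpa using s.B_pos)
  obtain ⟨_, ⟨h₁, h₂, h₃, h₄⟩, g, rfl⟩ :=
    mem_closure_iff_nhds.1 hf _ (conj.and (comm.and (close.and iterate)))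
  exact ⟨g, fun x => (ContinuousMap.dist_apply_le_dist x).trans h₁.le,
    fun x => (ContinuousMap.dist_apply_le_dist x).trans h₂.le,
    fun x => (ContinuousMap.dist_apply_le_dist x).trans h₃.le,
    fun x => (ContinuousMap.dist_apply_le_dist x).trans h₄.le⟩

theorem exists_isSuccessor (hf : IsNearHomeomorph f) (s : Stage Y) (n : ℕ) :
    ∃ p : (Y ≃ₜ Y) × Stage Y, s.IsSuccessor f n p.1 p.2 := by
  obtain ⟨g, hg⟩ := hf.exists_isGoodApprox s n
  let H := g.trans s.H
  obtain ⟨ρ, hρ, hHsymm⟩ := Metric.uniformContinuous_iff_le.1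
    (CompactSpace.uniformContinuous_of_continuous H.symm.continuous) (s.δ / 2)
    (half_pos s.δ_pos)
  have hB : 0 < min (ρ / 4) (s.B / 2) := lt_min (by positivity) (half_pos s.B_pos)
  obtain ⟨δ, hδ, hH⟩ := Metric.uniformContinuous_iff_le.1
    (CompactSpace.uniformContinuous_of_continuous H.continuous) _ hB
  refine ⟨(g, ⟨H, _, δ, hB, hδ, fun u v => @hH u v⟩), hg, rfl, min_le_right _ _, ?_⟩
  exact fun u v huv => hHsymm (huv.trans (by linarith [min_le_left (ρ / 4) (s.B / 2)]))

def Stage.initial : Stage Y :=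
  ⟨Homeomorph.refl Y, 1, 1, one_pos, one_pos, fun _ _ => id⟩

noncomputable def step (hf : IsNearHomeomorph f) (n : ℕ) (s : Stage Y) : (Y ≃ₜ Y) × Stage Y :=
  (hf.exists_isSuccessor s n).choose

noncomputable def stage (hf : IsNearHomeomorph f) : ℕ → Stage Y
  | 0 => Stage.initial
  | n + 1 => (hf.step n (hf.stage n)).2

noncomputable def approx (hf : IsNearHomeomorph f) (n : ℕ) : Y ≃ₜ Y :=
  (hf.step n (hf.stage n)).1

section Construction

variable (hf : IsNearHomeomorph f)

theorem stage_isSuccessor (n : ℕ) :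
    (hf.stage n).IsSuccessor f n (hf.approx n) (hf.stage (n + 1)) :=
  (hf.exists_isSuccessor (hf.stage n) n).choose_spec

theorem stage_succ_H_apply (n : ℕ) (x : Y) :
    (hf.stage (n + 1)).H x = (hf.stage n).H (hf.approx n x) := by
  rw [(hf.stage_isSuccessor n).H_eq]; rfl

theorem stage_succ_H_symm_apply (n : ℕ) (x : Y) :
    (hf.stage (n + 1)).H.symm x = (hf.approx n).symm ((hf.stage n).H.symm x) := by
  rw [(hf.stage_isSuccessor n).H_eq]; rfl

theorem stage_B_add_le (n m : ℕ) : (hf.stage (n + m)).B ≤ (hf.stage n).B * (1 / 2) ^ m := by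
  induction m with
  | zero => simp
  | succ m ih =>
    calc (hf.stage (n + m + 1)).B ≤ (hf.stage (n + m)).B / 2 := (hf.stage_isSuccessor _).B_le
      _ ≤ (hf.stage n).B * (1 / 2) ^ (m + 1) := by rw [pow_succ]; linarith

theorem stage_B_le (n : ℕ) : (hf.stage n).B ≤ (1 / 2) ^ n := by
  simpa [stage, Stage.initial] using hf.stage_B_add_le 0 n

theorem tendsto_stage_B : Tendsto (fun n => (hf.stage n).B) atTop (𝓝 0) :=
  squeeze_zero (fun n => (hf.stage n).B_pos.le) hf.stage_B_le
    (tendsto_pow_atTop_nhds_zero_of_lt_one (by norm_num) (by norm_num))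

noncomputable def conjugate (n : ℕ) : C(Y, Y) :=
  ((hf.stage n).H : C(Y, Y)).comp (f.comp (hf.stage n).H.symm)

noncomputable def homeoApprox (n : ℕ) : Y ≃ₜ Y :=
  (hf.stage n).H.symm.trans (hf.stage (n + 1)).H

noncomputable def factorApprox (n : ℕ) : C(Y, Y) :=
  ⟨f^[n] ∘ (hf.stage n).H.symm, (f.continuous.iterate n).comp (hf.stage n).H.symm.continuous⟩

theorem dist_homeoApprox_conjugate_le (n : ℕ) :
    dist (hf.homeoApprox n : C(Y, Y)) (hf.conjugate n) ≤ (hf.stage n).B :=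
  (ContinuousMap.dist_le (hf.stage n).B_pos.le).2 fun x => by
    simpa [homeoApprox, conjugate, stage_succ_H_apply] using
      (hf.stage_isSuccessor n).approx.conj ((hf.stage n).H.symm x)

theorem dist_conjugate_succ_le (n : ℕ) :
    dist (hf.conjugate n) (hf.conjugate (n + 1)) ≤ (hf.stage n).B :=
  (ContinuousMap.dist_le (hf.stage n).B_pos.le).2 fun x => by
    simpa [conjugate, stage_succ_H_apply, stage_succ_H_symm_apply] using
      (hf.stage_isSuccessor n).approx.comm ((hf.approx n).symm ((hf.stage n).H.symm x))

theorem dist_factorApprox_succ_le (n : ℕ) :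
    dist (hf.factorApprox n) (hf.factorApprox (n + 1)) ≤ (hf.stage n).B :=
  (ContinuousMap.dist_le (hf.stage n).B_pos.le).2 fun x => by
    simpa [factorApprox, stage_succ_H_symm_apply, iterate_succ_apply] using
      (hf.stage_isSuccessor n).approx.iterate ((hf.approx n).symm ((hf.stage n).H.symm x))

theorem factorApprox_succ_comp_homeoApprox (n : ℕ) :
    (hf.factorApprox (n + 1)).comp (hf.homeoApprox n) = f.comp (hf.factorApprox n) := by
  ext x
  simp only [factorApprox, homeoApprox, ContinuousMap.comp_apply, ContinuousMap.coe_mk,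
    comp_apply, Homeomorph.trans_apply, Homeomorph.symm_apply_apply]
  exact iterate_succ_apply' f n _

theorem surjective_factorApprox (n : ℕ) : Surjective (hf.factorApprox n) :=
  (hf.surjective.iterate n).comp (hf.stage n).H.symm.surjective

theorem cauchySeq_conjugate : CauchySeq hf.conjugate :=
  cauchySeq_of_le_geometric (1 / 2) 1 (by norm_num) fun n => by
    rw [one_mul]
    exact (hf.dist_conjugate_succ_le n).trans (hf.stage_B_le n)

theorem cauchySeq_factorApprox : CauchySeq hf.factorApprox :=
  cauchySeq_of_le_geometric (1 / 2) 1 (by norm_num) fun n => by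
    rw [one_mul]
    exact (hf.dist_factorApprox_succ_le n).trans (hf.stage_B_le n)

section Limit

variable {φ : C(Y, Y)} (hφ : Tendsto hf.conjugate atTop (𝓝 φ))
include hφ

theorem dist_conjugate_le (n : ℕ) : dist (hf.conjugate n) φ ≤ 2 * (hf.stage n).B := by
  have := dist_le_of_le_geometric_of_tendsto₀ (1 / 2) (hf.stage n).B (by norm_num)
    (fun m => by
      rw [comp_apply, comp_apply, add_right_comm, add_comm m n]
      exact (hf.dist_conjugate_succ_le (n + m)).trans (hf.stage_B_add_le n m))
    (hφ.comp (tendsto_add_atTop_nat n))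
  norm_num at this
  linarith

theorem tendsto_homeoApprox : Tendsto (fun n => (hf.homeoApprox n : C(Y, Y))) atTop (𝓝 φ) :=
  hφ.congr_dist (squeeze_zero (fun _ => dist_nonneg)
    (fun n => by rw [dist_comm]; exact hf.dist_homeoApprox_conjugate_le n) hf.tendsto_stage_B)

theorem injective_of_tendsto_conjugate : Injective φ := by
  intro x y hxy
  refine dist_le_zero.1 (ge_of_tendsto' hf.tendsto_stage_B fun k => ?_)
  set s := hf.stage k
  set t := hf.stage (k + 1)
  set g := hf.approx k
  have hG : dist (hf.conjugate (k + 1) x) (hf.conjugate (k + 1) y) ≤ 4 * t.B := by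
    have hx := (ContinuousMap.dist_apply_le_dist x).trans (hf.dist_conjugate_le hφ (k + 1))
    have hy := (ContinuousMap.dist_apply_le_dist y).trans (hf.dist_conjugate_le hφ (k + 1))
    rw [hxy] at hx
    linarith [dist_triangle_right (hf.conjugate (k + 1) x) (hf.conjugate (k + 1) y) (φ y)]
  have hfxy : dist (f (t.H.symm x)) (f (t.H.symm y)) ≤ s.δ / 2 := by
    simpa [conjugate] using (hf.stage_isSuccessor k).dist_symm_apply_le _ _ hG
  have hg_apply (z : Y) : g (t.H.symm z) = s.H.symm z := by
    simp [t, g, s, stage_succ_H_symm_apply]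
  have hclose := (hf.stage_isSuccessor k).approx.close
  have hsymm_dist : dist (s.H.symm x) (s.H.symm y) ≤ s.δ :=
    calc dist (s.H.symm x) (s.H.symm y)
        ≤ dist (g (t.H.symm x)) (f (t.H.symm x)) + dist (f (t.H.symm x)) (f (t.H.symm y))
          + dist (f (t.H.symm y)) (g (t.H.symm y)) := by
          rw [← hg_apply x, ← hg_apply y]; exact dist_triangle4 _ _ _ _
      _ ≤ s.δ / 4 + s.δ / 2 + s.δ / 4 := by
          gcongr
          · exact hclose _
          · rw [dist_comm]; exact hclose _
      _ = s.δ := by ring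
  simpa using s.dist_apply_le _ _ hsymm_dist

end Limit

end Construction

theorem exists_homeomorph_semiconj (hf : IsNearHomeomorph f) :
    ∃ (fhat : Y ≃ₜ Y) (h : C(Y, Y)), Surjective h ∧ Semiconj h fhat f := by
  obtain ⟨φ, hφ⟩ := cauchySeq_tendsto_of_complete hf.cauchySeq_conjugate
  obtain ⟨h, hh⟩ := cauchySeq_tendsto_of_complete hf.cauchySeq_factorApprox
  have hF := hf.tendsto_homeoApprox hφ
  have hφ_bij : Bijective φ := ⟨hf.injective_of_tendsto_conjugate hφ,
    ContinuousMap.isClosed_setOf_surjective.mem_of_tendsto hF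
      (Eventually.of_forall fun n => (hf.homeoApprox n).surjective)⟩
  have h_surj : Surjective h := ContinuousMap.isClosed_setOf_surjective.mem_of_tendsto hh
    (Eventually.of_forall hf.surjective_factorApprox)
  have h_comp : h.comp φ = f.comp h := tendsto_nhds_unique
    (((hh.comp (tendsto_add_atTop_nat 1)).compCM hF).congr
      hf.factorApprox_succ_comp_homeoApprox)
    (tendsto_const_nhds.compCM hh)
  exact ⟨φ.continuous.homeoOfEquivCompactToT2 (f := Equiv.ofBijective φ hφ_bij), h, h_surj,
    fun x => DFunLike.congr_fun h_comp x⟩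

end IsNearHomeomorph

theorem stmt10_general {Y : Type*} [MetricSpace Y] [CompactSpace Y]
    (f : Y → Y)
    (fs : ℕ → Y ≃ₜ Y)
    (hconv : TendstoUniformly (fun n x => fs n x) f atTop) :
    ∃ (fhat : Y ≃ₜ Y) (h : Y → Y),
      Continuous h ∧ Function.Surjective h ∧ h ∘ fhat = f ∘ h := by
  have hf : Continuous f := hconv.continuous (Frequently.of_forall fun n => (fs n).continuous)
  have hnear : IsNearHomeomorph ⟨f, hf⟩ :=
    mem_closure_of_tendsto
      ((ContinuousMap.tendsto_iff_tendstoUniformly (F := fun n => (fs n : C(Y, Y)))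
        (f := ⟨f, hf⟩)).2 hconv)
      (Eventually.of_forall fun n => ⟨fs n, rfl⟩)
  obtain ⟨fhat, h, h_surj, h_semiconj⟩ := hnear.exists_homeomorph_semiconj
  exact ⟨fhat, h, h.continuous, h_surj, h_semiconj.comp_eq⟩

theorem stmt10 {Y : Type*} [MetricSpace Y] [CompactSpace Y]
    (f : Y → Y) (hf : Continuous f)
    (fs : ℕ → Y ≃ₜ Y)
    (hconv : TendstoUniformly (fun n x => fs n x) f atTop) :
    ∃ (fhat : Y ≃ₜ Y) (h : Y → Y),
      Continuous h ∧ Function.Surjective h ∧ h ∘ fhat = f ∘ h :=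
  stmt10_general f fs hconv
end

section
/- Let A : ℝ² → ℝ² be an invertible linear map with A(ℤ²) ⊆ ℤ². Let F, F̂ : ℝ² → ℝ² be continuous maps satisfying F(x+v) = F(x)+v and F̂(x+v) = F̂(x)+v for all x ∈ ℝ², v ∈ ℤ², and let R : ℝ² → ℝ² be a continuous map satisfying R(x+v) = R(x) + A v for all x ∈ ℝ², v ∈ ℤ². If F ∘ R = R ∘ F̂, then ρ(F) = A(ρ(F̂)), the image of the rotation set ρ(F̂) under A. -/
open Filter Topology

/-- The Misiurewicz–Ziemian rotation set of a lift `F : ℝ² → ℝ²`. -/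
def rotSet (F : ℝ × ℝ → ℝ × ℝ) : Set (ℝ × ℝ) :=
  ⋂ m : ℕ, closure (⋃ n ∈ Set.Ioi m,
    {w : ℝ × ℝ | ∃ x : ℝ × ℝ, w = ((n : ℝ))⁻¹ • (F^[n] x - x)})

/-- A map `ℝ² → ℝ²` commuting with all integer translations. -/
def Equivariant (g : ℝ × ℝ → ℝ × ℝ) : Prop :=
  ∀ (x : ℝ × ℝ) (v : ℤ × ℤ),
    g (x + ((v.1 : ℝ), (v.2 : ℝ))) = g x + ((v.1 : ℝ), (v.2 : ℝ))

/-!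
Write `R = A + G`. Equivariance of `R` makes `G` periodic, hence bounded, so
`F^[n] (R y) - R y = A (Fhat^[n] y - y) + O(1)`: after division by `n`, the displacements of `F`
at the points `R y` and the images under `A` of the displacements of `Fhat` agree up to `O(1/n)`.
This gives the equality of rotation sets once every point is of the form `R y`. Surjectivity of
`R` comes from that of the bounded perturbation `x ↦ x + A⁻¹ (G x)` of the identity, which is the
Brouwer fixed point theorem, here derived from Sperner's lemma for a triangle.
-/

section Sperner

open Finset

lemma sum_range_add_succ_eq_zmod_two (s : ℕ → ZMod 2) (n : ℕ) :
    ∑ i ∈ range n, (s i + s (i + 1)) = s 0 + s n := by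
  have h := sum_range_sub s n
  simp only [CharTwo.sub_eq_add] at h
  simpa only [add_comm] using h

section TriangularGrid

variable (u : ℕ → ℕ → ZMod 2) (n : ℕ)

lemma sum_lower_add_sum_upper_shift_snd :
    ∑ i ∈ range n, ∑ j ∈ range (n - i), u i j
      + ∑ i ∈ range n, ∑ j ∈ range (n - 1 - i), u i (j + 1) = ∑ i ∈ range n, u i 0 := by
  rw [← sum_add_distrib]
  refine sum_congr rfl fun i hi => ?_
  rw [show n - i = n - 1 - i + 1 by simp at hi; omega, sum_range_succ', add_right_comm,
    CharTwo.add_self_eq_zero, zero_add]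

lemma sum_lower_add_sum_upper_shift_fst :
    ∑ i ∈ range n, ∑ j ∈ range (n - i), u i j
      + ∑ i ∈ range n, ∑ j ∈ range (n - 1 - i), u (i + 1) j = ∑ j ∈ range n, u 0 j := by
  rw [← sum_add_distrib]
  simp_rw [show ∀ i, n - 1 - i = n - (i + 1) by omega]
  rw [sum_range_add_succ_eq_zmod_two (fun k => ∑ j ∈ range (n - k), u k j)]
  simp

lemma sum_lower_add_sum_upper :
    ∑ i ∈ range n, ∑ j ∈ range (n - i), u i j
      + ∑ i ∈ range n, ∑ j ∈ range (n - 1 - i), u i j = ∑ i ∈ range n, u i (n - 1 - i) := by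
  rw [← sum_add_distrib]
  refine sum_congr rfl fun i hi => ?_
  rw [show n - i = n - 1 - i + 1 by simp at hi; omega, sum_range_succ, add_right_comm,
    CharTwo.add_self_eq_zero, zero_add]

/-- Mod-2 Stokes formula for the triangulation of `{i + j ≤ n}` into lower cells
`(i, j), (i+1, j), (i, j+1)` and upper cells `(i+1, j), (i, j+1), (i+1, j+1)`, where
`h i j`, `v i j`, `d i j` are the values on the edges from `(i, j)` to `(i+1, j)`, from `(i, j)`
to `(i, j+1)`, and from `(i+1, j)` to `(i, j+1)`: interior edges are counted twice. -/
lemma sum_cells_eq_sum_boundary (h v d : ℕ → ℕ → ZMod 2) :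
    ∑ i ∈ range n, ∑ j ∈ range (n - i), (h i j + v i j + d i j)
      + ∑ i ∈ range n, ∑ j ∈ range (n - 1 - i), (d i j + v (i + 1) j + h i (j + 1))
      = ∑ i ∈ range n, h i 0 + ∑ j ∈ range n, v 0 j + ∑ i ∈ range n, d i (n - 1 - i) := by
  rw [← sum_lower_add_sum_upper_shift_snd h, ← sum_lower_add_sum_upper_shift_fst v,
    ← sum_lower_add_sum_upper d]
  simp only [sum_add_distrib]
  abel

end TriangularGrid

def door (a b : Fin 3) : ZMod 2 := if (a = 0 ∧ b = 1) ∨ (a = 1 ∧ b = 0) then 1 else 0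

lemma door_eq_zero_of_ne_one : ∀ a b : Fin 3, a ≠ 1 → b ≠ 1 → door a b = 0 := by decide

lemma door_eq_zero_of_ne_zero : ∀ a b : Fin 3, a ≠ 0 → b ≠ 0 → door a b = 0 := by decide

lemma door_eq_of_ne_two : ∀ a b : Fin 3, a ≠ 2 → b ≠ 2 →
    door a b = (if a = 0 then 1 else 0) + (if b = 0 then 1 else 0) := by decide

def doorCount (a b c : Fin 3) : ZMod 2 := door a b + door a c + door b c

lemma eq_or_eq_or_eq_of_doorCount_ne_zero :
    ∀ a b c : Fin 3, doorCount a b c ≠ 0 → ∀ k, k = a ∨ k = b ∨ k = c := by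
  decide

variable {n : ℕ} (ℓ : ℕ → ℕ → Fin 3)

lemma sum_cells_doorCount_eq_one (hleft : ∀ j ≤ n, ℓ 0 j ≠ 1) (hbottom : ∀ i ≤ n, ℓ i 0 ≠ 2)
    (hhyp : ∀ i j, i + j = n → ℓ i j ≠ 0) :
    ∑ i ∈ range n, ∑ j ∈ range (n - i), doorCount (ℓ i j) (ℓ (i + 1) j) (ℓ i (j + 1))
      + ∑ i ∈ range n, ∑ j ∈ range (n - 1 - i),
          doorCount (ℓ (i + 1) j) (ℓ i (j + 1)) (ℓ (i + 1) (j + 1)) = 1 := by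
  have hbottom_sum : ∑ i ∈ range n, door (ℓ i 0) (ℓ (i + 1) 0) = 1 := by
    rw [sum_congr rfl fun i hi => door_eq_of_ne_two _ _ (hbottom i (by simp at hi; omega))
      (hbottom (i + 1) (by simp at hi; omega)), sum_range_add_succ_eq_zmod_two
      (fun i => if ℓ i 0 = 0 then 1 else 0)]
    have h00 : ℓ 0 0 = 0 := by
      have := hleft 0 (Nat.zero_le n); have := hbottom 0 (Nat.zero_le n); omega
    simp [h00, hhyp n 0 (add_zero n)]
  have hleft_sum : ∑ j ∈ range n, door (ℓ 0 j) (ℓ 0 (j + 1)) = 0 :=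
    sum_eq_zero fun j hj => door_eq_zero_of_ne_one _ _ (hleft j (by simp at hj; omega))
      (hleft (j + 1) (by simp at hj; omega))
  have hhyp_sum : ∑ i ∈ range n, door (ℓ (i + 1) (n - 1 - i)) (ℓ i (n - 1 - i + 1)) = 0 :=
    sum_eq_zero fun i hi => door_eq_zero_of_ne_zero _ _ (hhyp _ _ (by simp at hi; omega))
      (hhyp _ _ (by simp at hi; omega))
  refine (sum_cells_eq_sum_boundary n (fun i j => door (ℓ i j) (ℓ (i + 1) j))
    (fun i j => door (ℓ i j) (ℓ i (j + 1))) (fun i j => door (ℓ (i + 1) j) (ℓ i (j + 1)))).trans ?_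
  rw [hbottom_sum, hleft_sum, hhyp_sum, add_zero, add_zero]

theorem sperner (hleft : ∀ j ≤ n, ℓ 0 j ≠ 1) (hbottom : ∀ i ≤ n, ℓ i 0 ≠ 2)
    (hhyp : ∀ i j, i + j = n → ℓ i j ≠ 0) :
    ∃ i j, ∀ k : Fin 3, ∃ a ≤ 1, ∃ b ≤ 1, i + a + (j + b) ≤ n ∧ ℓ (i + a) (j + b) = k := by
  have hsum := sum_cells_doorCount_eq_one ℓ hleft hbottom hhyp
  by_cases hlower :
      ∑ i ∈ range n, ∑ j ∈ range (n - i), doorCount (ℓ i j) (ℓ (i + 1) j) (ℓ i (j + 1)) = 0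
  · rw [hlower, zero_add] at hsum
    obtain ⟨i, hi, hrow⟩ := exists_ne_zero_of_sum_ne_zero (hsum ▸ one_ne_zero)
    obtain ⟨j, hj, hcell⟩ := exists_ne_zero_of_sum_ne_zero hrow
    simp only [mem_range] at hi hj
    refine ⟨i, j, fun k => ?_⟩
    rcases eq_or_eq_or_eq_of_doorCount_ne_zero _ _ _ hcell k with rfl | rfl | rfl
    exacts [⟨1, le_rfl, 0, zero_le_one, by omega, rfl⟩, ⟨0, zero_le_one, 1, le_rfl, by omega, rfl⟩,
      ⟨1, le_rfl, 1, le_rfl, by omega, rfl⟩]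
  · obtain ⟨i, hi, hrow⟩ := exists_ne_zero_of_sum_ne_zero hlower
    obtain ⟨j, hj, hcell⟩ := exists_ne_zero_of_sum_ne_zero hrow
    simp only [mem_range] at hi hj
    refine ⟨i, j, fun k => ?_⟩
    rcases eq_or_eq_or_eq_of_doorCount_ne_zero _ _ _ hcell k with rfl | rfl | rfl
    exacts [⟨0, zero_le_one, 0, zero_le_one, by omega, rfl⟩,
      ⟨1, le_rfl, 0, zero_le_one, by omega, rfl⟩, ⟨0, zero_le_one, 1, le_rfl, by omega, rfl⟩]

end Sperner

open Set Metric

def triangle (c : ℝ) : Set (ℝ × ℝ) := {p | 0 ≤ p.1 ∧ 0 ≤ p.2 ∧ p.1 + p.2 ≤ c}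

lemma isCompact_triangle (c : ℝ) : IsCompact (triangle c) := by
  refine isCompact_of_isClosed_isBounded ((isClosed_le continuous_const continuous_fst).inter
    ((isClosed_le continuous_const continuous_snd).inter
      (isClosed_le (continuous_fst.add continuous_snd) continuous_const)))
    ((isBounded_Icc (0 : ℝ × ℝ) (c, c)).subset ?_)
  rintro p ⟨h1, h2, h3⟩
  exact ⟨⟨h1, h2⟩, by constructor <;> dsimp <;> linarith⟩

noncomputable def gridPoint (c : ℝ) (n i j : ℕ) : ℝ × ℝ := ((i : ℝ) * (c / n), (j : ℝ) * (c / n))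

section GridLabels

variable {c : ℝ} {n : ℕ}

lemma gridPoint_mem_triangle (hc : 0 ≤ c) {i j : ℕ} (hij : i + j ≤ n) :
    gridPoint c n i j ∈ triangle c := by
  refine ⟨by unfold gridPoint; positivity, by unfold gridPoint; positivity, ?_⟩
  rcases n.eq_zero_or_pos with rfl | hn
  · simpa [gridPoint] using hc
  calc (i : ℝ) * (c / n) + j * (c / n) = ((i + j : ℕ) : ℝ) * (c / n) := by push_cast; ring
    _ ≤ n * (c / n) := by gcongr
    _ = c := by field_simp

lemma gridPoint_fst_add_snd {i j : ℕ} (hn : 0 < n) (hij : i + j = n) :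
    (gridPoint c n i j).1 + (gridPoint c n i j).2 = c := by
  simp only [gridPoint, ← add_mul, ← Nat.cast_add, hij]
  field_simp

lemma dist_gridPoint_le (hc : 0 ≤ c) (i j : ℕ) {a b a' b' : ℕ} (ha : a ≤ 1) (hb : b ≤ 1)
    (ha' : a' ≤ 1) (hb' : b' ≤ 1) :
    dist (gridPoint c n (i + a) (j + b)) (gridPoint c n (i + a') (j + b')) ≤ c / n := by
  have key : ∀ k e e' : ℕ, e ≤ 1 → e' ≤ 1 →
      dist (((k + e : ℕ) : ℝ) * (c / n)) (((k + e' : ℕ) : ℝ) * (c / n)) ≤ c / n := by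
    intro k e e' he he'
    have he : (e : ℝ) ≤ 1 := by exact_mod_cast he
    have he' : (e' : ℝ) ≤ 1 := by exact_mod_cast he'
    rw [Real.dist_eq, ← sub_mul, abs_mul, abs_of_nonneg (by positivity : 0 ≤ c / n)]
    refine mul_le_of_le_one_left (by positivity) (abs_le.2 ⟨?_, ?_⟩) <;> push_cast <;> linarith
  rw [Prod.dist_eq]
  exact max_le (key i a a' ha ha') (key j b b' hb hb')

noncomputable def spernerLabel (f : ℝ × ℝ → ℝ × ℝ) (p : ℝ × ℝ) : Fin 3 :=
  if (f p).1 < p.1 then 1 else if (f p).2 < p.2 then 2 else 0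

variable {f : ℝ × ℝ → ℝ × ℝ} {p : ℝ × ℝ}

lemma fst_lt_of_spernerLabel_eq_one (h : spernerLabel f p = 1) : (f p).1 < p.1 := by
  unfold spernerLabel at h; split_ifs at h <;> simp_all

lemma snd_lt_of_spernerLabel_eq_two (h : spernerLabel f p = 2) : (f p).2 < p.2 := by
  unfold spernerLabel at h; split_ifs at h <;> simp_all

lemma le_of_spernerLabel_eq_zero (h : spernerLabel f p = 0) : p ≤ f p := by
  unfold spernerLabel at h; split_ifs at h with h1 h2 <;> simp_all [Prod.le_def]

lemma spernerLabel_ne_one (hp : p.1 = 0) (hfp : f p ∈ triangle c) : spernerLabel f p ≠ 1 :=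
  fun h => (fst_lt_of_spernerLabel_eq_one h).not_ge (hp ▸ hfp.1)

lemma spernerLabel_ne_two (hp : p.2 = 0) (hfp : f p ∈ triangle c) : spernerLabel f p ≠ 2 :=
  fun h => (snd_lt_of_spernerLabel_eq_two h).not_ge (hp ▸ hfp.2.1)

lemma spernerLabel_ne_zero (hp : p.1 + p.2 = c) (hfp : f p ∈ triangle c) (hne : f p ≠ p) :
    spernerLabel f p ≠ 0 := fun h => by
  obtain ⟨h1, h2⟩ := le_of_spernerLabel_eq_zero h
  exact hne (Prod.ext (by linarith [hfp.2.2]) (by linarith [hfp.2.2]))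

lemma norm_lt_of_nonneg_of_dist_lt {x y z : ℝ × ℝ} {ε : ℝ} (hx : 0 ≤ x) (hy : y.1 < 0)
    (hz : z.2 < 0) (hxy : dist x y < ε) (hxz : dist x z < ε) : ‖x‖ < ε := by
  rw [Prod.dist_eq, Real.dist_eq, Real.dist_eq, max_lt_iff] at hxy hxz
  rw [Prod.norm_def, Real.norm_eq_abs, Real.norm_eq_abs, abs_of_nonneg hx.1, abs_of_nonneg hx.2]
  exact max_lt (by linarith [(abs_lt.1 hxy.1).2]) (by linarith [(abs_lt.1 hxz.2).2])

end GridLabels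

theorem exists_fixedPoint_triangle {c : ℝ} {f : ℝ × ℝ → ℝ × ℝ} (hc : 0 ≤ c)
    (hf : ContinuousOn f (triangle c)) (hmaps : MapsTo f (triangle c) (triangle c)) :
    ∃ p ∈ triangle c, f p = p := by
  by_contra! hfix
  -- `‖f p - p‖ ≥ ε > 0` on the triangle; on a grid finer than the modulus of uniform continuity
  -- of `f - id` for `ε`, a fully labelled cell has a corner `u` with `0 ≤ f u - u < ε`.
  obtain ⟨p₀, hp₀, hmin⟩ := (isCompact_triangle c).exists_isMinOn ⟨0, le_rfl, le_rfl, by simpa⟩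
    (hf.sub continuousOn_id).norm
  have hε : 0 < ‖f p₀ - p₀‖ := norm_pos_iff.2 (sub_ne_zero.2 (hfix p₀ hp₀))
  obtain ⟨η, hη, hunif⟩ := uniformContinuousOn_iff.1
    ((isCompact_triangle c).uniformContinuousOn_of_continuous (hf.sub continuousOn_id)) _ hε
  obtain ⟨n, hn⟩ := exists_nat_gt (c / η)
  have hn0 : 0 < n := by have := div_nonneg hc hη.le; exact_mod_cast this.trans_lt hn
  have hmesh : c / n < η := by rw [div_lt_iff₀ (by positivity)]; rwa [div_lt_iff₀' hη] at hn
  obtain ⟨i, j, hcell⟩ := sperner (fun i j => spernerLabel f (gridPoint c n i j))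
    (fun j hj => spernerLabel_ne_one (by simp [gridPoint])
      (hmaps (gridPoint_mem_triangle hc (by omega))))
    (fun i hi => spernerLabel_ne_two (by simp [gridPoint])
      (hmaps (gridPoint_mem_triangle hc (by omega))))
    (fun i j hij => spernerLabel_ne_zero (gridPoint_fst_add_snd hn0 hij)
      (hmaps (gridPoint_mem_triangle hc hij.le)) (hfix _ (gridPoint_mem_triangle hc hij.le)))
  obtain ⟨a, ha, b, hb, hu, hu0⟩ := hcell 0
  obtain ⟨a', ha', b', hb', hv, hv1⟩ := hcell 1
  obtain ⟨a'', ha'', b'', hb'', hw, hw2⟩ := hcell 2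
  have hclose : ∀ {a' b'}, a' ≤ 1 → b' ≤ 1 → i + a' + (j + b') ≤ n →
      dist (f (gridPoint c n (i + a) (j + b)) - gridPoint c n (i + a) (j + b))
        (f (gridPoint c n (i + a') (j + b')) - gridPoint c n (i + a') (j + b')) < ‖f p₀ - p₀‖ :=
    fun ha' hb' hv => hunif _ (gridPoint_mem_triangle hc hu) _ (gridPoint_mem_triangle hc hv)
      ((dist_gridPoint_le hc i j ha hb ha' hb').trans_lt hmesh)
  refine (norm_lt_of_nonneg_of_dist_lt (sub_nonneg.2 (le_of_spernerLabel_eq_zero hu0))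
    (sub_neg.2 (fst_lt_of_spernerLabel_eq_one hv1)) (sub_neg.2 (snd_lt_of_spernerLabel_eq_two hw2))
    (hclose ha' hb' hv) (hclose ha'' hb'' hw)).not_ge (hmin (gridPoint_mem_triangle hc hu))

open Bornology Function

lemma exists_fixedPoint_of_forall_sub_mem_triangle {c : ℝ} {f : ℝ × ℝ → ℝ × ℝ}
    (hc : 0 ≤ c) (hf : Continuous f) (t : ℝ × ℝ) (h : ∀ x, f x - t ∈ triangle c) :
    ∃ x, f x = x := by
  obtain ⟨q, -, hq⟩ := exists_fixedPoint_triangle (f := fun q => f (q + t) - t) hc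
    ((hf.comp (continuous_id.add continuous_const)).sub continuous_const).continuousOn
    (fun q _ => h (q + t))
  exact ⟨q + t, eq_add_of_sub_eq hq⟩

theorem surjective_add_of_isBounded_range {g : ℝ × ℝ → ℝ × ℝ} (hg : Continuous g)
    (hb : IsBounded (range g)) : Surjective fun x => x + g x := by
  obtain ⟨C, hC⟩ := isBounded_iff_forall_norm_le.1 hb
  have hC : ∀ x, |(g x).1| ≤ C ∧ |(g x).2| ≤ C := fun x =>
    ⟨(norm_fst_le _).trans (hC _ (mem_range_self x)),
      (norm_snd_le _).trans (hC _ (mem_range_self x))⟩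
  have hC0 : 0 ≤ C := (abs_nonneg _).trans (hC 0).1
  intro p
  obtain ⟨x, hx⟩ := exists_fixedPoint_of_forall_sub_mem_triangle (f := fun x => p - g x)
    (by positivity : 0 ≤ 4 * C) (continuous_const.sub hg) (p - (C, C)) fun x => by
      obtain ⟨h1, h2⟩ := hC x
      rw [abs_le] at h1 h2
      refine ⟨?_, ?_, ?_⟩ <;> simp only [Prod.fst_sub, Prod.snd_sub] <;> linarith
  exact ⟨x, eq_sub_iff_add_eq.1 hx.symm⟩

theorem surjective_of_isBounded_range_sub (A : (ℝ × ℝ) ≃ₗ[ℝ] (ℝ × ℝ)) {R : ℝ × ℝ → ℝ × ℝ}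
    (hR : Continuous R) (hb : IsBounded (range fun x => R x - A x)) : Surjective R := by
  set B := A.symm.toContinuousLinearEquiv
  have hsurj := surjective_add_of_isBounded_range (g := fun x => B (R x - A x))
    (B.continuous.comp (hR.sub A.toContinuousLinearEquiv.continuous))
    (by simpa only [range_comp'] using B.lipschitz.isBounded_image hb)
  intro p
  obtain ⟨x, hx⟩ := hsurj (A.symm p)
  refine ⟨x, ?_⟩
  simpa [B] using congrArg A hx

lemma isBounded_range_of_periodic {Y : Type*} [PseudoMetricSpace Y] {G : ℝ × ℝ → Y}
    (hG : Continuous G) (hper : ∀ (x : ℝ × ℝ) (v : ℤ × ℤ), G (x + ((v.1 : ℝ), (v.2 : ℝ))) = G x) :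
    IsBounded (range G) := by
  refine ((isCompact_Icc (a := (0 : ℝ × ℝ)) (b := 1)).image hG).isBounded.subset ?_
  rintro _ ⟨x, rfl⟩
  refine ⟨(Int.fract x.1, Int.fract x.2), ?_, ?_⟩
  · exact ⟨⟨Int.fract_nonneg _, Int.fract_nonneg _⟩,
      ⟨(Int.fract_lt_one _).le, (Int.fract_lt_one _).le⟩⟩
  · exact (hper _ (⌊x.1⌋, ⌊x.2⌋)).symm.trans (congrArg G (by ext <;> simp [Int.fract_add_floor]))

def kuratowskiLimsup {X : Type*} [TopologicalSpace X] (S : ℕ → Set X) : Set X :=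
  ⋂ m : ℕ, closure (⋃ n ∈ Ioi m, S n)

lemma Homeomorph.image_kuratowskiLimsup {X Y : Type*} [TopologicalSpace X] [TopologicalSpace Y]
    (e : X ≃ₜ Y) (S : ℕ → Set X) :
    e '' kuratowskiLimsup S = kuratowskiLimsup fun n => e '' S n := by
  simp only [kuratowskiLimsup, image_iInter e.bijective, e.image_closure, image_iUnion₂]

lemma kuratowskiLimsup_subset_of_dist_le {X : Type*} [PseudoMetricSpace X] {S T : ℕ → Set X}
    {δ : ℕ → ℝ} (hδ : Tendsto δ atTop (𝓝 0)) (h : ∀ n, ∀ x ∈ S n, ∃ y ∈ T n, dist x y ≤ δ n) :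
    kuratowskiLimsup S ⊆ kuratowskiLimsup T := by
  intro w hw
  simp only [kuratowskiLimsup, mem_iInter, Metric.mem_closure_iff, mem_iUnion₂, mem_Ioi,
    exists_prop] at hw ⊢
  intro m ε hε
  obtain ⟨M, hM⟩ := eventually_atTop.1 (hδ.eventually (gt_mem_nhds (half_pos hε)))
  obtain ⟨x, ⟨n, hn, hx⟩, hwx⟩ := hw (max m M) _ (half_pos hε)
  obtain ⟨y, hy, hxy⟩ := h n x hx
  refine ⟨y, ⟨n, (le_max_left m M).trans_lt hn, hy⟩, ?_⟩
  linarith [dist_triangle w x y, hM n ((le_max_right m M).trans hn.le)]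

def displacements (F : ℝ × ℝ → ℝ × ℝ) (n : ℕ) : Set (ℝ × ℝ) :=
  range fun x => (n : ℝ)⁻¹ • (F^[n] x - x)

lemma rotSet_eq_kuratowskiLimsup (F : ℝ × ℝ → ℝ × ℝ) :
    rotSet F = kuratowskiLimsup (displacements F) := by
  simp only [rotSet, kuratowskiLimsup, displacements, range, eq_comm]

lemma dist_displacement_le {E : Type*} [NormedAddCommGroup E] [NormedSpace ℝ E] (A : E →ₗ[ℝ] E)
    {F Fhat R : E → E} (hsemi : Semiconj R Fhat F) (hb : IsBounded (range fun x => R x - A x))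
    (n : ℕ) (y : E) :
    dist ((n : ℝ)⁻¹ • (F^[n] (R y) - R y)) (A ((n : ℝ)⁻¹ • (Fhat^[n] y - y)))
      ≤ diam (range fun x => R x - A x) / n := by
  rw [← (hsemi.iterate_right n).eq, map_smul, dist_eq_norm, ← smul_sub, norm_smul, norm_inv,
    Real.norm_natCast, inv_mul_eq_div, map_sub,
    show R (Fhat^[n] y) - R y - (A (Fhat^[n] y) - A y)
      = (R (Fhat^[n] y) - A (Fhat^[n] y)) - (R y - A y) by abel, ← dist_eq_norm]
  gcongr
  exact dist_le_diam_of_mem hb (mem_range_self _) (mem_range_self _)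

theorem rotSet_eq_image_of_semiconj (A : (ℝ × ℝ) ≃ₗ[ℝ] (ℝ × ℝ)) {F Fhat R : ℝ × ℝ → ℝ × ℝ}
    (hsemi : Semiconj R Fhat F) (hR : Surjective R) (hb : IsBounded (range fun x => R x - A x)) :
    rotSet F = A '' rotSet Fhat := by
  have hdist := dist_displacement_le A.toLinearMap hsemi hb
  have hδ := tendsto_const_div_atTop_nhds_zero_nat (diam (range fun x => R x - A x))
  rw [rotSet_eq_kuratowskiLimsup, rotSet_eq_kuratowskiLimsup,
    ← A.coe_toContinuousLinearEquiv', ← A.toContinuousLinearEquiv.coe_toHomeomorph,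
    Homeomorph.image_kuratowskiLimsup]
  refine (kuratowskiLimsup_subset_of_dist_le hδ ?_).antisymm
    (kuratowskiLimsup_subset_of_dist_le hδ ?_)
  · rintro n _ ⟨x, rfl⟩
    obtain ⟨y, rfl⟩ := hR x
    exact ⟨_, mem_image_of_mem _ (mem_range_self y), hdist n y⟩
  · rintro n _ ⟨_, ⟨y, rfl⟩, rfl⟩
    exact ⟨_, mem_range_self (R y), (dist_comm _ _).trans_le (hdist n y)⟩

theorem stmt12_general (A : (ℝ × ℝ) ≃ₗ[ℝ] (ℝ × ℝ))
    (F Fhat R : ℝ × ℝ → ℝ × ℝ)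
    (hR : Continuous R)
    (eR : ∀ (x : ℝ × ℝ) (v : ℤ × ℤ),
      R (x + ((v.1 : ℝ), (v.2 : ℝ))) = R x + A ((v.1 : ℝ), (v.2 : ℝ)))
    (hcomm : F ∘ R = R ∘ Fhat) :
    rotSet F = (⇑A) '' rotSet Fhat := by
  have hb : IsBounded (range fun x => R x - A x) :=
    isBounded_range_of_periodic (hR.sub A.toContinuousLinearEquiv.continuous) fun x v => by
      rw [eR, map_add]; abel
  exact rotSet_eq_image_of_semiconj A (fun x => (congrFun hcomm x).symm)
    (surjective_of_isBounded_range_sub A hR hb) hb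

theorem stmt12 (A : (ℝ × ℝ) ≃ₗ[ℝ] (ℝ × ℝ))
    (hA : ∀ v : ℤ × ℤ, ∃ w : ℤ × ℤ,
      A ((v.1 : ℝ), (v.2 : ℝ)) = ((w.1 : ℝ), (w.2 : ℝ)))
    (F Fhat R : ℝ × ℝ → ℝ × ℝ)
    (hF : Continuous F) (hFhat : Continuous Fhat) (hR : Continuous R)
    (eF : Equivariant F) (eFhat : Equivariant Fhat)
    (eR : ∀ (x : ℝ × ℝ) (v : ℤ × ℤ),
      R (x + ((v.1 : ℝ), (v.2 : ℝ))) = R x + A ((v.1 : ℝ), (v.2 : ℝ)))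
    (hcomm : F ∘ R = R ∘ Fhat) :
    rotSet F = (⇑A) '' rotSet Fhat :=
  stmt12_general A F Fhat R hR eR hcomm
end
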